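/- Let p be an odd prime and a,b,c,d indeterminates over ℚ. Set Δ = a^p d^p − b^p c^p, and define the 2×2 matrix f_p = ((u,v),(w,u)) with u = ((a^p d^p + b^p c^p)(ad+bc)^p − 2^{p+1}a^p b^p c^p d^p)/Δ^2, v = b^p d^p(2^p(a^p d^p+b^p c^p) − 2(ad+bc)^p)/Δ^2, w = a^p c^p(2^p(a^p d^p+b^p c^p) − 2(ad+bc)^p)/Δ^2. Then f_p equals the matrix product (X^{(p)T} q X^{(p)})^{-1}·(X^T q X)^{(p)}, where X = ((a,b),(c,d)), q = ((0,1),(1,0)), X^{(p)} denotes the entrywise p-th power, and T denotes transpose. -/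

import Mathlib

open MvPolynomial Matrix

noncomputable section

/-- The rational function field `E = K(a,b,c,d)`, realized as the fraction field of the
polynomial ring in the four indeterminates `a, b, c, d`. -/
abbrev E (K : Type) [Field K] := FractionRing (MvPolynomial (Fin 4) K)

/-- The transcendental generator `a` of `E = K(a,b,c,d)`. -/
def va (K : Type) [Field K] : E K := algebraMap (MvPolynomial (Fin 4) K) (E K) (X 0)
/-- The transcendental generator `b` of `E = K(a,b,c,d)`. -/
def vb (K : Type) [Field K] : E K := algebraMap (MvPolynomial (Fin 4) K) (E K) (X 1)
/-- The transcendental generator `c` of `E = K(a,b,c,d)`. -/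
def vc (K : Type) [Field K] : E K := algebraMap (MvPolynomial (Fin 4) K) (E K) (X 2)
/-- The transcendental generator `d` of `E = K(a,b,c,d)`. -/
def vd (K : Type) [Field K] : E K := algebraMap (MvPolynomial (Fin 4) K) (E K) (X 3)

/-! For `X = !![a, b; c, d]` and the split form `q = !![0, 1; 1, 0]`, the Gram matrix `Xᵀ q X` is
`!![2ac, ad + bc; ad + bc, 2bd]`, of determinant `-(ad - bc)²`. Hence `X^{(p)ᵀ} q X^{(p)}` is
invertible once `a^p d^p ≠ b^p c^p`, which holds for indeterminates and `p ≠ 0`, and the identity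
reduces to checking `(X^{(p)ᵀ} q X^{(p)}) f_p = (Xᵀ q X)^{(p)}` entrywise. -/

section GramMatrix

variable {R : Type*} [CommRing R]

lemma map_pow_fin_two (a b c d : R) (p : ℕ) :
    !![a, b; c, d].map (· ^ p) = !![a ^ p, b ^ p; c ^ p, d ^ p] := by
  ext i j; fin_cases i <;> fin_cases j <;> rfl

lemma transpose_mul_swap_mul_fin_two (a b c d : R) :
    !![a, b; c, d]ᵀ * !![0, 1; 1, 0] * !![a, b; c, d]
      = !![2 * (a * c), a * d + b * c; a * d + b * c, 2 * (b * d)] := by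
  rw [show !![a, b; c, d]ᵀ = !![a, c; b, d] from eta_fin_two _, mul_fin_two, mul_fin_two]
  simp only [EmbeddingLike.apply_eq_iff_eq, vecCons_inj, and_true]
  refine ⟨⟨?_, ?_⟩, ?_, ?_⟩ <;> ring

end GramMatrix

theorem eq_inv_gram_map_pow_mul_map_pow_gram {K : Type*} [Field K] (p : ℕ) (a b c d u v w : K)
    (hΔ : a ^ p * d ^ p - b ^ p * c ^ p ≠ 0)
    (hu : u = ((a ^ p * d ^ p + b ^ p * c ^ p) * (a * d + b * c) ^ p
          - 2 ^ (p + 1) * a ^ p * b ^ p * c ^ p * d ^ p)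
        / (a ^ p * d ^ p - b ^ p * c ^ p) ^ 2)
    (hv : v = b ^ p * d ^ p * (2 ^ p * (a ^ p * d ^ p + b ^ p * c ^ p)
          - 2 * (a * d + b * c) ^ p) / (a ^ p * d ^ p - b ^ p * c ^ p) ^ 2)
    (hw : w = a ^ p * c ^ p * (2 ^ p * (a ^ p * d ^ p + b ^ p * c ^ p)
          - 2 * (a * d + b * c) ^ p) / (a ^ p * d ^ p - b ^ p * c ^ p) ^ 2) :
    !![u, v; w, u] = ((!![a, b; c, d].map (· ^ p))ᵀ * !![0, 1; 1, 0] * !![a, b; c, d].map (· ^ p))⁻¹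
        * (!![a, b; c, d]ᵀ * !![0, 1; 1, 0] * !![a, b; c, d]).map (· ^ p) := by
  simp only [transpose_mul_swap_mul_fin_two, map_pow_fin_two, mul_pow]
  have hG : IsUnit (!![2 * (a ^ p * c ^ p), a ^ p * d ^ p + b ^ p * c ^ p;
      a ^ p * d ^ p + b ^ p * c ^ p, 2 * (b ^ p * d ^ p)] : Matrix (Fin 2) (Fin 2) K).det := by
    rw [isUnit_iff_ne_zero, det_fin_two_of]
    convert neg_ne_zero.mpr (pow_ne_zero 2 hΔ) using 1
    ring
  suffices h : !![2 * (a ^ p * c ^ p), a ^ p * d ^ p + b ^ p * c ^ p;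
      a ^ p * d ^ p + b ^ p * c ^ p, 2 * (b ^ p * d ^ p)] * !![u, v; w, u]
      = !![2 ^ p * (a ^ p * c ^ p), (a * d + b * c) ^ p; (a * d + b * c) ^ p, 2 ^ p * (b ^ p * d ^ p)] by
    rw [← h, nonsing_inv_mul_cancel_left _ _ hG]
  rw [mul_fin_two]
  simp only [EmbeddingLike.apply_eq_iff_eq, vecCons_inj, and_true]
  subst hu hv hw
  refine ⟨⟨?_, ?_⟩, ?_, ?_⟩ <;>
    rw [mul_div_assoc', mul_div_assoc', ← add_div, div_eq_iff (pow_ne_zero 2 hΔ)] <;> ring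

lemma va_pow_mul_vd_pow_sub_ne_zero (K : Type) [Field K] {p : ℕ} (hp : p ≠ 0) :
    va K ^ p * vd K ^ p - vb K ^ p * vc K ^ p ≠ 0 := by
  have hpoly : (X 0 ^ p * X 3 ^ p - X 1 ^ p * X 2 ^ p : MvPolynomial (Fin 4) K) ≠ 0 := by
    intro h
    simpa [zero_pow hp] using congrArg (eval ![1, 0, 0, 1]) h
  simpa [va, vb, vc, vd] using (map_ne_zero_iff _ (IsFractionRing.injective _ (E K))).mpr hpoly

theorem stmt15_general (p : ℕ) (hp : p.Prime)
    (a b c d : E ℚ) (ha : a = va ℚ) (hb : b = vb ℚ) (hc : c = vc ℚ) (hd : d = vd ℚ)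
    (u v w : E ℚ)
    (hu : u = ((a ^ p * d ^ p + b ^ p * c ^ p) * (a * d + b * c) ^ p
          - 2 ^ (p + 1) * a ^ p * b ^ p * c ^ p * d ^ p)
        / (a ^ p * d ^ p - b ^ p * c ^ p) ^ 2)
    (hv : v = b ^ p * d ^ p * (2 ^ p * (a ^ p * d ^ p + b ^ p * c ^ p)
          - 2 * (a * d + b * c) ^ p) / (a ^ p * d ^ p - b ^ p * c ^ p) ^ 2)
    (hw : w = a ^ p * c ^ p * (2 ^ p * (a ^ p * d ^ p + b ^ p * c ^ p)
          - 2 * (a * d + b * c) ^ p) / (a ^ p * d ^ p - b ^ p * c ^ p) ^ 2) :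
    (!![u, v; w, u] : Matrix (Fin 2) (Fin 2) (E ℚ))
      = ((Matrix.map !![a, b; c, d] (fun z => z ^ p))ᵀ * !![0, 1; 1, 0] * (Matrix.map !![a, b; c, d] (fun z => z ^ p)))⁻¹
        * (Matrix.map (!![a, b; c, d]ᵀ * !![0, 1; 1, 0] * !![a, b; c, d]) (fun z => z ^ p)) := by
  subst ha hb hc hd
  exact eq_inv_gram_map_pow_mul_map_pow_gram p _ _ _ _ u v w
    (va_pow_mul_vd_pow_sub_ne_zero ℚ hp.ne_zero) hu hv hw

/-- For an odd prime `p` and `X = ((a,b),(c,d))`, `q = ((0,1),(1,0))` over `ℚ(a,b,c,d)`,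
the matrix `f_p = ((u,v),(w,u))` with the explicit entries `u, v, w` equals
`(X^{(p)ᵀ} q X^{(p)})⁻¹ · (Xᵀ q X)^{(p)}`, where `M^{(p)}` denotes the entrywise `p`-th
power and `ᵀ` the transpose. -/
theorem stmt15 (p : ℕ) (hp : p.Prime) (hodd : Odd p)
    (a b c d : E ℚ) (ha : a = va ℚ) (hb : b = vb ℚ) (hc : c = vc ℚ) (hd : d = vd ℚ)
    (u v w : E ℚ)
    (hu : u = ((a ^ p * d ^ p + b ^ p * c ^ p) * (a * d + b * c) ^ p
          - 2 ^ (p + 1) * a ^ p * b ^ p * c ^ p * d ^ p)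
        / (a ^ p * d ^ p - b ^ p * c ^ p) ^ 2)
    (hv : v = b ^ p * d ^ p * (2 ^ p * (a ^ p * d ^ p + b ^ p * c ^ p)
          - 2 * (a * d + b * c) ^ p) / (a ^ p * d ^ p - b ^ p * c ^ p) ^ 2)
    (hw : w = a ^ p * c ^ p * (2 ^ p * (a ^ p * d ^ p + b ^ p * c ^ p)
          - 2 * (a * d + b * c) ^ p) / (a ^ p * d ^ p - b ^ p * c ^ p) ^ 2) :
    (!![u, v; w, u] : Matrix (Fin 2) (Fin 2) (E ℚ))
      = ((Matrix.map !![a, b; c, d] (fun z => z ^ p))ᵀ * !![0, 1; 1, 0] * (Matrix.map !![a, b; c, d] (fun z => z ^ p)))⁻¹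
        * (Matrix.map (!![a, b; c, d]ᵀ * !![0, 1; 1, 0] * !![a, b; c, d]) (fun z => z ^ p)) :=
  stmt15_general p hp a b c d ha hb hc hd u v w hu hv hw
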